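/- Let P ⊆ ℝ^d be a reflexive polytope and let v, w be distinct lattice points on the boundary of P with v ≁ w (not in a common facet) and v + w ≠ 0, so that v + w ∈ ∂P. Then {v, w} is a ℤ-basis of the lattice span(v,w) ∩ ℤ^d, and there exists exactly one pair (a, b) of positive integers such that z := a·v + b·w lies on the boundary of P with v ∼ z and w ∼ z. Moreover a = 1 or b = 1, a equals the number of lattice points on the segment [w, z] minus one, b equals the number of lattice points on the segment [v, z] minus one, and every facet of P containing z contains exactly one of the points v or w. -/

import Mathlib

open scoped BigOperators

noncomputable section

/-- The standard dot product on `ℝ^d`. -/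
def dotProd {d : ℕ} (x y : Fin d → ℝ) : ℝ := ∑ i, x i * y i

/-- A point of `ℝ^d` is a lattice point (element of `ℤ^d`) if all coordinates are integers. -/
def IsLatticePoint {d : ℕ} (x : Fin d → ℝ) : Prop := ∀ i, ∃ n : ℤ, x i = (n : ℝ)

/-- A lattice polytope is the convex hull of finitely many lattice points. -/
def IsLatticePolytope {d : ℕ} (P : Set (Fin d → ℝ)) : Prop :=
  ∃ V : Finset (Fin d → ℝ), (∀ v ∈ V, IsLatticePoint v) ∧ P = convexHull ℝ (V : Set (Fin d → ℝ))

/-- The dual polytope `P* = {y | ⟨x,y⟩ ≥ -1 ∀ x ∈ P}`. -/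
def dualPolytope {d : ℕ} (P : Set (Fin d → ℝ)) : Set (Fin d → ℝ) :=
  {y | ∀ x ∈ P, -1 ≤ dotProd x y}

/-- A reflexive polytope: a full-dimensional lattice polytope with `0` in its interior whose
dual polytope is again a lattice polytope. -/
def IsReflexive {d : ℕ} (P : Set (Fin d → ℝ)) : Prop :=
  IsLatticePolytope P ∧ (0 : Fin d → ℝ) ∈ interior P ∧ IsLatticePolytope (dualPolytope P)

/-- A face of `P`: the subset of `P` where some linear functional attains its maximum bound. -/
def IsFace {d : ℕ} (P F : Set (Fin d → ℝ)) : Prop :=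
  ∃ (u : Fin d → ℝ) (c : ℝ), (∀ x ∈ P, dotProd u x ≤ c) ∧ F = {x ∈ P | dotProd u x = c}

/-- A facet of a `d`-dimensional polytope: a nonempty face of dimension `d - 1`. -/
def IsFacet {d : ℕ} (P F : Set (Fin d → ℝ)) : Prop :=
  IsFace P F ∧ F.Nonempty ∧ Module.finrank ℝ (vectorSpan ℝ F) = d - 1

/-- `x ∼ y` : `x` and `y` lie in a common facet of `P`. -/
def SameFacet {d : ℕ} (P : Set (Fin d → ℝ)) (x y : Fin d → ℝ) : Prop :=
  ∃ F, IsFacet P F ∧ x ∈ F ∧ y ∈ F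

/-- The star set of `x`: the union of all facets of `P` containing `x`. -/
def starSet {d : ℕ} (P : Set (Fin d → ℝ)) (x : Fin d → ℝ) : Set (Fin d → ℝ) :=
  {y | SameFacet P x y}

/-- A family of lattice points forming a `ℤ`-basis of the lattice `ℤ^d`. -/
def IsZBasisFamily {d n : ℕ} (s : Fin n → (Fin d → ℝ)) : Prop :=
  LinearIndependent ℝ s ∧ (∀ i, IsLatticePoint (s i)) ∧
    ∀ z : Fin d → ℝ, IsLatticePoint z → ∃ c : Fin n → ℤ, z = ∑ i, (c i : ℝ) • s i

/-- A primitive lattice point: a nonzero lattice point such that no lattice point lies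
strictly between `0` and it. -/
def IsPrimitivePoint {d : ℕ} (x : Fin d → ℝ) : Prop :=
  IsLatticePoint x ∧ x ≠ 0 ∧ ∀ y ∈ openSegment ℝ (0 : Fin d → ℝ) x, ¬ IsLatticePoint y

/-- A Fano polytope: a full-dimensional lattice polytope with `0` in its interior all of whose
vertices are primitive lattice points. -/
def IsFanoPolytope {d : ℕ} (P : Set (Fin d → ℝ)) : Prop :=
  IsLatticePolytope P ∧ (0 : Fin d → ℝ) ∈ interior P ∧
    ∀ v ∈ Set.extremePoints ℝ P, IsPrimitivePoint v

/-- Canonical: the only interior lattice point is the origin. -/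
def IsCanonicalPolytope {d : ℕ} (P : Set (Fin d → ℝ)) : Prop :=
  {x ∈ interior P | IsLatticePoint x} = {0}

/-- Terminal: the only lattice points of `P` are the origin and the vertices. -/
def IsTerminalPolytope {d : ℕ} (P : Set (Fin d → ℝ)) : Prop :=
  {x ∈ P | IsLatticePoint x} = insert (0 : Fin d → ℝ) (Set.extremePoints ℝ P)

/-- Simplicial: every facet has exactly `d` vertices. -/
def IsSimplicial {d : ℕ} (P : Set (Fin d → ℝ)) : Prop :=
  ∀ F, IsFacet P F → (Set.extremePoints ℝ F).ncard = d

/-- Smooth: the vertices of every facet form a `ℤ`-basis of the lattice. -/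
def IsSmoothPolytope {d : ℕ} (P : Set (Fin d → ℝ)) : Prop :=
  ∀ F, IsFacet P F → ∃ s : Fin d → (Fin d → ℝ),
    Set.extremePoints ℝ F = Set.range s ∧ IsZBasisFamily s

/-- Semi-terminal: any two distinct vertices in a common facet are joined by a lattice-point
free segment. -/
def IsSemiTerminal {d : ℕ} (P : Set (Fin d → ℝ)) : Prop :=
  ∀ v ∈ Set.extremePoints ℝ P, ∀ w ∈ Set.extremePoints ℝ P, v ≠ w → SameFacet P v w →
    {x ∈ segment ℝ v w | IsLatticePoint x} = {v, w}

/-- The quotient space `ℝ^d / ℝv`. -/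
abbrev QuotSpace {d : ℕ} (v : Fin d → ℝ) := (Fin d → ℝ) ⧸ (Submodule.span ℝ {v})

/-- The canonical projection `π_v : ℝ^d → ℝ^d/ℝv`. -/
def projAlong {d : ℕ} (v : Fin d → ℝ) : (Fin d → ℝ) →ₗ[ℝ] QuotSpace v :=
  (Submodule.span ℝ {v}).mkQ

/-- The quotient lattice `ℤ^d/ℤv`, regarded as the image of `ℤ^d` in `ℝ^d/ℝv`. -/
def quotLattice {d : ℕ} (v : Fin d → ℝ) : Set (QuotSpace v) :=
  projAlong v '' {x | IsLatticePoint x}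

/-- A primitive point of the quotient lattice `ℤ^d/ℤv`. -/
def QuotPrimitive {d : ℕ} (v : Fin d → ℝ) (q : QuotSpace v) : Prop :=
  q ∈ quotLattice v ∧ q ≠ 0 ∧ ∀ t ∈ openSegment ℝ (0 : QuotSpace v) q, t ∉ quotLattice v

/-- A Fano polytope in the quotient space `ℝ^d/ℝv` with respect to the lattice `ℤ^d/ℤv`. -/
def QuotIsFanoPolytope {d : ℕ} (v : Fin d → ℝ) (Q : Set (QuotSpace v)) : Prop :=
  (∃ V : Finset (QuotSpace v), (∀ q ∈ V, q ∈ quotLattice v) ∧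
      Q = convexHull ℝ (V : Set (QuotSpace v))) ∧
  (0 : QuotSpace v) ∈ interior Q ∧
  ∀ q ∈ Set.extremePoints ℝ Q, QuotPrimitive v q

/-- Unimodular equivalence: a real linear isomorphism mapping lattice onto lattice and one
polytope onto the other. -/
def LatticeEquivTo {d e : ℕ} (P : Set (Fin d → ℝ)) (Q : Set (Fin e → ℝ)) : Prop :=
  ∃ f : (Fin d → ℝ) ≃ₗ[ℝ] (Fin e → ℝ),
    (∀ x, IsLatticePoint x ↔ IsLatticePoint (f x)) ∧ f '' P = Q

/-- The hexagon `Z₂ = conv(±(1,0), ±(0,1), ±(1,1)) ⊆ ℝ²`. -/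
def Z2 : Set (Fin 2 → ℝ) :=
  convexHull ℝ ({![1,0], ![0,1], ![1,1], ![-1,0], ![0,-1], ![-1,-1]} : Set (Fin 2 → ℝ))

/-- The `j`-th coordinate pair of a point of `ℝ^{2m}`. -/
def pairCoords {m : ℕ} (x : Fin (2 * m) → ℝ) (j : Fin m) : Fin 2 → ℝ :=
  fun i => x ⟨2 * (j : ℕ) + (i : ℕ), by have := j.isLt; have := i.isLt; omega⟩

/-- The `m`-fold product `Z₂ × ⋯ × Z₂ ⊆ ℝ^{2m}`. -/
def prodZ2 (m : ℕ) : Set (Fin (2 * m) → ℝ) := {x | ∀ j : Fin m, pairCoords x j ∈ Z2}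

/-- The `j`-th coordinate pair of a point of `ℝ^{2m+1}` (first `2m` coordinates). -/
def pairCoords' {m : ℕ} (x : Fin (2 * m + 1) → ℝ) (j : Fin m) : Fin 2 → ℝ :=
  fun i => x ⟨2 * (j : ℕ) + (i : ℕ), by have := j.isLt; have := i.isLt; omega⟩

/-- The product `[-1,1] × Z₂ × ⋯ × Z₂ ⊆ ℝ^{2m+1}` with `m` hexagon factors. -/
def boxProdZ2 (m : ℕ) : Set (Fin (2 * m + 1) → ℝ) :=
  {x | x ⟨2 * m, by omega⟩ ∈ Set.Icc (-1 : ℝ) 1 ∧ ∀ j : Fin m, pairCoords' x j ∈ Z2}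

/-!
Every facet of a reflexive polytope `P` is `{x ∈ P | ⟨x, u⟩ = -1}` for a lattice vertex `u` of
`P*`, so facet normals take only the values `-1, 0, 1, 2, …` on lattice points of `P`. Hence for
lattice points `x, y ∈ P` either `x + y ∈ P` or `x ∼ y`. This gives `v + w ∈ ∂P`; a facet through
`v + w` has height `0` at one of `v, w`, say at `v`, and moving from `w` in direction `v` until
leaving `P` produces `z = a • v + w` with `v ∼ z ∼ w`.

For any such `z = a • v + b • w`, let `u, u'` be normals of facets through `v, z` and `w, z`, and
`s = ⟨w, u⟩`, `t = ⟨v, u'⟩ ∈ ℕ` (not `-1`, as `v ≁ w`). Then `a = b s + 1` and `b = a t + 1`, so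
`s t = 0`, i.e. `a = 1` or `b = 1`; the same normals bound any other such pair, which gives
uniqueness. Since `[[-1, s], [t, -1]]` is unimodular, the lattice values of `u, u'` on
`α • v + β • w` force `α, β ∈ ℤ`: `{v, w}` is a `ℤ`-basis of `span(v, w) ∩ ℤ^d`, and the
lattice points of `[v, z]` are `v + k ((a - 1) • v + w)`, `0 ≤ k ≤ b`.
-/

open Matrix Set Filter Topology

section DotProd

variable {d : ℕ}

theorem dotProd_eq_dotProduct (x y : Fin d → ℝ) : dotProd x y = x ⬝ᵥ y := rfl

theorem dotProd_comm (x y : Fin d → ℝ) : dotProd x y = dotProd y x := dotProduct_comm x y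

@[simp] theorem dotProd_add_left (x y u : Fin d → ℝ) :
    dotProd (x + y) u = dotProd x u + dotProd y u := add_dotProduct x y u

@[simp] theorem dotProd_sub_left (x y u : Fin d → ℝ) :
    dotProd (x - y) u = dotProd x u - dotProd y u := sub_dotProduct x y u

@[simp] theorem dotProd_smul_left (c : ℝ) (x u : Fin d → ℝ) :
    dotProd (c • x) u = c * dotProd x u := smul_dotProduct c x u

@[simp] theorem dotProd_add_right (x u y : Fin d → ℝ) :
    dotProd x (u + y) = dotProd x u + dotProd x y := dotProduct_add x u y

@[simp] theorem dotProd_smul_right (c : ℝ) (x u : Fin d → ℝ) :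
    dotProd x (c • u) = c * dotProd x u := dotProduct_smul c x u

theorem dotProductEquiv_apply_eq_dotProd (u x : Fin d → ℝ) :
    dotProductEquiv ℝ (Fin d) u x = dotProd x u := dotProduct_comm u x

theorem exists_dotProd_eq_apply (f : Module.Dual ℝ (Fin d → ℝ)) :
    ∃ y, ∀ x, dotProd x y = f x :=
  ⟨(dotProductEquiv ℝ (Fin d)).symm f, fun x => by
    rw [dotProd_comm, dotProd_eq_dotProduct, ← dotProductEquiv_apply_apply,
      LinearEquiv.apply_symm_apply]⟩

theorem eq_of_forall_dotProd_eq {F : Set (Fin d → ℝ)} (hF : Submodule.span ℝ F = ⊤)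
    {y y' : Fin d → ℝ} (h : ∀ x ∈ F, dotProd x y = dotProd x y') : y = y' :=
  (dotProductEquiv ℝ (Fin d)).injective <| LinearMap.ext_on hF fun x hx => by
    simp only [dotProductEquiv_apply_eq_dotProd, h x hx]

theorem exists_dotProd_le_of_mem_convexHull {S : Set (Fin d → ℝ)} {x : Fin d → ℝ}
    (hx : x ∈ convexHull ℝ S) (y : Fin d → ℝ) : ∃ s ∈ S, dotProd s y ≤ dotProd x y := by
  simpa only [dotProductEquiv_apply_eq_dotProd] using
    ((dotProductEquiv ℝ (Fin d) y).concaveOn convex_univ).exists_le_of_mem_convexHull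
      (subset_univ S) hx

theorem finrank_span_eq_finrank_vectorSpan_add_one {F : Set (Fin d → ℝ)} (hF : F.Nonempty)
    {u : Fin d → ℝ} (hu : ∀ x ∈ F, dotProd x u = -1) :
    Module.finrank ℝ (Submodule.span ℝ F) = Module.finrank ℝ (vectorSpan ℝ F) + 1 := by
  obtain ⟨x₀, hx₀⟩ := hF
  have hx₀0 : x₀ ≠ 0 := by
    rintro rfl
    simpa [dotProd] using hu 0 hx₀
  have hx₀span : x₀ ∉ vectorSpan ℝ F := by
    have hker : vectorSpan ℝ F ≤ LinearMap.ker (dotProductEquiv ℝ (Fin d) u) := by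
      rw [vectorSpan_def, Submodule.span_le]
      rintro _ ⟨x, hx, y, hy, rfl⟩
      simp only [SetLike.mem_coe, LinearMap.mem_ker, dotProductEquiv_apply_eq_dotProd,
        vsub_eq_sub, dotProd_sub_left, hu x hx, hu y hy, sub_self]
    intro h
    have := hker h
    rw [LinearMap.mem_ker, dotProductEquiv_apply_eq_dotProd, hu x₀ hx₀] at this
    norm_num at this
  have hsup : Submodule.span ℝ F = vectorSpan ℝ F ⊔ ℝ ∙ x₀ := by
    refine le_antisymm (Submodule.span_le.2 fun x hx => ?_) (sup_le ?_ ?_)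
    · simpa using Submodule.add_mem_sup (vsub_mem_vectorSpan ℝ hx hx₀)
        (Submodule.mem_span_singleton_self x₀)
    · rw [vectorSpan_def, Submodule.span_le]
      rintro _ ⟨x, hx, y, hy, rfl⟩
      exact Submodule.sub_mem _ (Submodule.subset_span hx) (Submodule.subset_span hy)
    · exact Submodule.span_mono (singleton_subset_iff.2 hx₀)
  have := Submodule.finrank_sup_add_finrank_inf_eq (vectorSpan ℝ F) (ℝ ∙ x₀)
  rw [← hsup, disjoint_iff.1 ((Submodule.disjoint_span_singleton' hx₀0).2 hx₀span), finrank_bot,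
    finrank_span_singleton hx₀0] at this
  omega

theorem finrank_vectorSpan_eq_sub_one_iff {F : Set (Fin d → ℝ)} (hF : F.Nonempty)
    {u : Fin d → ℝ} (hu : ∀ x ∈ F, dotProd x u = -1) :
    Module.finrank ℝ (vectorSpan ℝ F) = d - 1 ↔ Submodule.span ℝ F = ⊤ := by
  have h := finrank_span_eq_finrank_vectorSpan_add_one hF hu
  have hle := Submodule.finrank_le (Submodule.span ℝ F)
  rw [Submodule.eq_top_iff_finrank_eq, h]
  simp only [Module.finrank_fin_fun] at hle ⊢
  omega

end DotProd

section Lattice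

variable {d : ℕ}

theorem IsLatticePoint.add {x y : Fin d → ℝ} (hx : IsLatticePoint x) (hy : IsLatticePoint y) :
    IsLatticePoint (x + y) := fun i => by
  obtain ⟨m, hm⟩ := hx i
  obtain ⟨n, hn⟩ := hy i
  exact ⟨m + n, by simp [hm, hn]⟩

theorem IsLatticePoint.intCast_smul {x : Fin d → ℝ} (hx : IsLatticePoint x) (c : ℤ) :
    IsLatticePoint ((c : ℝ) • x) := fun i => by
  obtain ⟨m, hm⟩ := hx i
  exact ⟨c * m, by simp [hm]⟩

theorem IsLatticePoint.natCast_smul {x : Fin d → ℝ} (hx : IsLatticePoint x) (c : ℕ) :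
    IsLatticePoint ((c : ℝ) • x) := by
  exact_mod_cast hx.intCast_smul c

theorem IsLatticePoint.exists_dotProd_eq_intCast {x y : Fin d → ℝ} (hx : IsLatticePoint x)
    (hy : IsLatticePoint y) : ∃ k : ℤ, dotProd x y = k := by
  choose m hm using hx
  choose n hn using hy
  exact ⟨∑ i, m i * n i, by simp [dotProd, hm, hn]⟩

theorem ncard_setOf_isLatticePoint_segment {p q : Fin d → ℝ} (hpL : IsLatticePoint p)
    (hqL : IsLatticePoint q) (hq : q ≠ 0)
    (hprim : ∀ t : ℝ, IsLatticePoint (p + t • q) → ∃ k : ℤ, t = k) (m : ℕ) :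
    {x ∈ segment ℝ p (p + (m : ℝ) • q) | IsLatticePoint x}.ncard = m + 1 := by
  classical
  have hinj : Function.Injective fun k : ℕ => p + (k : ℝ) • q := fun k k' hk => by
    simpa using smul_left_injective ℝ hq (add_left_cancel hk)
  suffices {x ∈ segment ℝ p (p + (m : ℝ) • q) | IsLatticePoint x} =
      (Finset.range (m + 1)).image fun k : ℕ => p + (k : ℝ) • q by
    rw [this, Set.ncard_coe_finset, Finset.card_image_of_injective _ hinj, Finset.card_range]
  ext x
  simp only [segment_eq_image', add_sub_cancel_left, smul_smul, mem_ofPred_eq, mem_image, mem_Icc,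
    Finset.coe_image, Finset.coe_range, mem_Iio]
  constructor
  · rintro ⟨⟨θ, ⟨hθ0, hθ1⟩, rfl⟩, hxL⟩
    obtain ⟨k, hk⟩ := hprim _ hxL
    have hk0 : (0 : ℝ) ≤ k := hk ▸ mul_nonneg hθ0 m.cast_nonneg
    have hkm : (k : ℝ) ≤ m := hk ▸ mul_le_of_le_one_left m.cast_nonneg hθ1
    lift k to ℕ using (by exact_mod_cast hk0)
    exact ⟨k, by exact_mod_cast Nat.lt_succ_of_le (by exact_mod_cast hkm), by rw [hk]; simp⟩
  · rintro ⟨k, hk, rfl⟩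
    refine ⟨⟨k / m, ⟨by positivity, div_le_one_of_le₀ (by exact_mod_cast Nat.le_of_lt_succ hk)
      m.cast_nonneg⟩, ?_⟩, hpL.add (hqL.natCast_smul k)⟩
    rw [div_mul_cancel_of_imp fun hm => by simp only [Nat.cast_eq_zero] at hm ⊢; omega]

end Lattice

section ReflexivePolytope

variable {d : ℕ} {P : Set (Fin d → ℝ)}

def dualVertices (P : Set (Fin d → ℝ)) : Set (Fin d → ℝ) := (dualPolytope P).extremePoints ℝ

theorem dualVertices_subset : dualVertices P ⊆ dualPolytope P := extremePoints_subset

def facetOf (P : Set (Fin d → ℝ)) (u : Fin d → ℝ) : Set (Fin d → ℝ) := {x ∈ P | dotProd x u = -1}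

theorem SameFacet.symm {x y : Fin d → ℝ} (h : SameFacet P x y) : SameFacet P y x := by
  obtain ⟨F, hF, hx, hy⟩ := h
  exact ⟨F, hF, hy, hx⟩

theorem SameFacet.left_mem {x y : Fin d → ℝ} (h : SameFacet P x y) : x ∈ P := by
  obtain ⟨F, ⟨⟨u, c, -, rfl⟩, -⟩, hx, -⟩ := h
  exact hx.1

theorem eq_zero_of_forall_dotProd_nonpos (h0 : (0 : Fin d → ℝ) ∈ interior P) {u : Fin d → ℝ}
    (hu : ∀ x ∈ P, dotProd u x ≤ 0) : u = 0 := by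
  obtain ⟨t, htu, ht⟩ : ∃ t : ℝ, t • u ∈ P ∧ 0 < t := by
    have hcont : Tendsto (fun t : ℝ => t • u) (𝓝 0) (𝓝 0) := by
      simpa using (tendsto_id (x := 𝓝 (0 : ℝ))).smul_const u
    exact ((hcont.eventually (mem_interior_iff_mem_nhds.1 h0)).filter_mono nhdsWithin_le_nhds
      |>.and (self_mem_nhdsWithin : Ioi (0 : ℝ) ∈ 𝓝[>] 0)).exists
  have huu : dotProd u u ≤ 0 := by
    have := hu _ htu
    rw [dotProd_smul_right] at this
    exact nonpos_of_mul_nonpos_right this ht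
  have : dotProd u u = 0 := le_antisymm huu (Finset.sum_nonneg fun i _ => mul_self_nonneg _)
  exact dotProduct_self_eq_zero.1 this

namespace IsReflexive

theorem convex (hP : IsReflexive P) : Convex ℝ P := by
  obtain ⟨V, -, rfl⟩ := hP.1
  exact convex_convexHull ℝ _

theorem isCompact (hP : IsReflexive P) : IsCompact P := by
  obtain ⟨V, -, rfl⟩ := hP.1
  exact V.finite_toSet.isCompact_convexHull ℝ

theorem mem_of_mem_frontier (hP : IsReflexive P) {x : Fin d → ℝ} (hx : x ∈ frontier P) : x ∈ P :=
  hP.isCompact.isClosed.frontier_subset hx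

theorem ne_zero_of_mem_frontier (hP : IsReflexive P) {x : Fin d → ℝ} (hx : x ∈ frontier P) :
    x ≠ 0 := by
  rintro rfl
  exact hx.2 hP.2.1

theorem finite_dualVertices (hP : IsReflexive P) : (dualVertices P).Finite := by
  obtain ⟨V, -, hV⟩ := hP.2.2
  rw [dualVertices, hV]
  exact V.finite_toSet.subset extremePoints_convexHull_subset

theorem isLatticePoint_of_mem_dualVertices (hP : IsReflexive P) {u : Fin d → ℝ}
    (hu : u ∈ dualVertices P) : IsLatticePoint u := by
  obtain ⟨V, hVL, hV⟩ := hP.2.2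
  rw [dualVertices, hV] at hu
  exact hVL u (extremePoints_convexHull_subset hu)

theorem convexHull_dualVertices (hP : IsReflexive P) :
    convexHull ℝ (dualVertices P) = dualPolytope P := by
  obtain ⟨V, -, hV⟩ := hP.2.2
  have hcompact : IsCompact (dualPolytope P) := hV ▸ V.finite_toSet.isCompact_convexHull ℝ
  have hconvex : Convex ℝ (dualPolytope P) := hV ▸ convex_convexHull ℝ _
  rw [← closure_convexHull_extremePoints hcompact hconvex,
    ← dualVertices, (hP.finite_dualVertices.isClosed_convexHull ℝ).closure_eq]

theorem exists_dualVertex_dotProd_le (hP : IsReflexive P) {y : Fin d → ℝ}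
    (hy : y ∈ dualPolytope P) (x : Fin d → ℝ) :
    ∃ u ∈ dualVertices P, dotProd x u ≤ dotProd x y := by
  rw [← hP.convexHull_dualVertices] at hy
  simpa only [dotProd_comm x] using exists_dotProd_le_of_mem_convexHull hy x

theorem mem_iff_forall_dualVertices (hP : IsReflexive P) {x : Fin d → ℝ} :
    x ∈ P ↔ ∀ u ∈ dualVertices P, -1 ≤ dotProd x u := by
  refine ⟨fun hx u hu => dualVertices_subset hu x hx, fun h => ?_⟩
  by_contra hxP
  obtain ⟨f, c, hfP, hfx⟩ :=
    geometric_hahn_banach_closed_point hP.convex hP.isCompact.isClosed hxP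
  have hc : 0 < c := by simpa using hfP 0 (interior_subset hP.2.1)
  obtain ⟨y, hy⟩ := exists_dotProd_eq_apply ((-c⁻¹) • (f : Module.Dual ℝ (Fin d → ℝ)))
  simp only [LinearMap.smul_apply, ContinuousLinearMap.coe_coe, smul_eq_mul] at hy
  have hyP : y ∈ dualPolytope P := fun a ha => by
    rw [hy, neg_mul, neg_le_neg_iff, inv_mul_le_one₀ hc]
    exact (hfP a ha).le
  obtain ⟨u, hu, hxu⟩ := hP.exists_dualVertex_dotProd_le hyP x
  have : dotProd x y < -1 := by
    rw [hy, neg_mul, neg_lt_neg_iff, one_lt_inv_mul₀ hc]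
    exact hfx
  exact absurd (h u hu) (by linarith)

theorem exists_dualVertex_dotProd_eq_neg_one (hP : IsReflexive P) {x : Fin d → ℝ}
    (hx : x ∈ frontier P) : ∃ u ∈ dualVertices P, dotProd x u = -1 := by
  set U := ⋂ u ∈ dualVertices P, {y : Fin d → ℝ | -1 < dotProd y u}
  have hUopen : IsOpen U := hP.finite_dualVertices.isOpen_biInter fun u _ =>
    isOpen_lt continuous_const (continuous_id.dotProduct continuous_const)
  have hUP : U ⊆ P := fun y hy => hP.mem_iff_forall_dualVertices.2 fun u hu =>
    (mem_iInter₂.1 hy u hu).le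
  have hxU : x ∉ U := fun hxU => hx.2 (interior_maximal hUP hUopen hxU)
  simp only [U, mem_iInter₂, mem_ofPred_eq, not_forall, not_lt] at hxU
  obtain ⟨u, hu, hxu⟩ := hxU
  exact ⟨u, hu, le_antisymm hxu (dualVertices_subset hu x (hP.mem_of_mem_frontier hx))⟩

theorem dotProd_eq_neg_one_or_natCast (hP : IsReflexive P) {x u : Fin d → ℝ} (hx : x ∈ P)
    (hxL : IsLatticePoint x) (hu : u ∈ dualVertices P) :
    dotProd x u = -1 ∨ ∃ n : ℕ, dotProd x u = n := by
  obtain ⟨k, hk⟩ := hxL.exists_dotProd_eq_intCast (hP.isLatticePoint_of_mem_dualVertices hu)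
  have hk1 : (-1 : ℤ) ≤ k := by
    have := dualVertices_subset hu x hx
    rw [hk] at this
    exact_mod_cast this
  rcases hk1.eq_or_lt with rfl | hk0
  · exact Or.inl (by simp [hk])
  · lift k to ℕ using (by omega)
    exact Or.inr ⟨k, by simp [hk]⟩

theorem eq_zero_of_mem_interior (hP : IsReflexive P) {x : Fin d → ℝ} (hx : x ∈ interior P)
    (hxL : IsLatticePoint x) : x = 0 := by
  obtain ⟨t, htx, ht⟩ : ∃ t : ℝ, t • x ∈ P ∧ 1 < t := by
    have hcont : Tendsto (fun t : ℝ => t • x) (𝓝 1) (𝓝 x) := by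
      simpa using (tendsto_id (x := 𝓝 (1 : ℝ))).smul_const x
    exact ((hcont.eventually (mem_interior_iff_mem_nhds.1 hx)).filter_mono nhdsWithin_le_nhds
      |>.and (self_mem_nhdsWithin : Ioi (1 : ℝ) ∈ 𝓝[>] 1)).exists
  -- no facet normal takes the value `-1` at `x`, so none is negative there and the ray `ℝ≥0 x`
  -- lies in the bounded set `P`
  have hnonneg : ∀ u ∈ dualVertices P, 0 ≤ dotProd x u := fun u hu => by
    have htu := dualVertices_subset hu _ htx
    rw [dotProd_smul_left] at htu
    rcases hP.dotProd_eq_neg_one_or_natCast (interior_subset hx) hxL hu with h | ⟨n, hn⟩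
    · rw [h] at htu
      linarith
    · exact hn ▸ n.cast_nonneg
  have hray : ∀ n : ℕ, (n : ℝ) • x ∈ P := fun n =>
    hP.mem_iff_forall_dualVertices.2 fun u hu => by
      rw [dotProd_smul_left]
      nlinarith [hnonneg u hu, n.cast_nonneg (α := ℝ)]
  obtain ⟨C, hC⟩ := isBounded_iff_forall_norm_le.1 hP.isCompact.isBounded
  by_contra hx0
  obtain ⟨n, hn⟩ := exists_nat_gt (C / ‖x‖)
  have hnC := hC _ (hray n)
  rw [norm_smul, Real.norm_natCast] at hnC
  rw [div_lt_iff₀ (norm_pos_iff.2 hx0)] at hn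
  linarith

theorem mem_frontier_of_isLatticePoint (hP : IsReflexive P) {x : Fin d → ℝ} (hx : x ∈ P)
    (hxL : IsLatticePoint x) (hx0 : x ≠ 0) : x ∈ frontier P :=
  ⟨subset_closure hx, fun hint => hx0 (hP.eq_zero_of_mem_interior hint hxL)⟩

theorem eventually_add_smul_mem_dualPolytope (hP : IsReflexive P) {u y : Fin d → ℝ}
    (hu : u ∈ dualPolytope P) (hy : ∀ x ∈ facetOf P u, dotProd x y = 0) :
    ∀ᶠ t in 𝓝 (0 : ℝ), u + t • y ∈ dualPolytope P := by
  obtain ⟨V, -, hV⟩ := hP.1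
  have hVP : ∀ x ∈ V, x ∈ P := fun x hx => hV ▸ subset_convexHull ℝ _ hx
  have hmem : ∀ y' : Fin d → ℝ, (∀ x ∈ V, -1 ≤ dotProd x y') → y' ∈ dualPolytope P :=
    fun y' h x hx => by
      rw [hV] at hx
      obtain ⟨s, hs, hsx⟩ := exists_dotProd_le_of_mem_convexHull hx y'
      exact (h s hs).trans hsx
  refine Eventually.mono ?_ fun t ht => hmem _ ht
  refine (eventually_all_finset V).2 fun x hx => ?_
  simp only [dotProd_add_right, dotProd_smul_right]
  rcases (hu x (hVP x hx)).eq_or_lt with h | h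
  · exact Eventually.of_forall fun t => by simp [← h, hy x ⟨hVP x hx, h.symm⟩]
  · have hcont : Tendsto (fun t : ℝ => dotProd x u + t * dotProd x y) (𝓝 0) (𝓝 (dotProd x u)) := by
      simpa using tendsto_const_nhds.add ((tendsto_id (x := 𝓝 (0 : ℝ))).mul_const (dotProd x y))
    exact (hcont.eventually (lt_mem_nhds h)).mono fun t ht => ht.le

theorem mem_dualVertices_iff (hP : IsReflexive P) {u : Fin d → ℝ} (hu : u ∈ dualPolytope P) :
    u ∈ dualVertices P ↔ Submodule.span ℝ (facetOf P u) = ⊤ := by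
  constructor
  · intro hext
    by_contra hspan
    obtain ⟨f, hf0, hfF⟩ :=
      Submodule.exists_dual_map_eq_bot_of_lt_top (lt_top_iff_ne_top.2 hspan) inferInstance
    obtain ⟨y, hy⟩ := exists_dotProd_eq_apply f
    have hy0 : y ≠ 0 := by
      rintro rfl
      exact hf0 (LinearMap.ext fun x => by simp [← hy, dotProd])
    have hyF : ∀ x ∈ facetOf P u, dotProd x y = 0 := fun x hx => by
      rw [hy]
      exact (LinearMap.le_ker_iff_map.2 hfF) (Submodule.subset_span hx)
    obtain ⟨ε, hε, hball⟩ :=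
      Metric.eventually_nhds_iff.1 (hP.eventually_add_smul_mem_dualPolytope hu hyF)
    have hε2 : |ε / 2| < ε := by rw [abs_of_pos (half_pos hε)]; linarith
    have hpos := hball (y := ε / 2) (by rwa [Real.dist_eq, sub_zero])
    have hneg := hball (y := -(ε / 2)) (by rwa [Real.dist_eq, sub_zero, abs_neg])
    have hseg : u ∈ openSegment ℝ (u + (-(ε / 2)) • y) (u + (ε / 2) • y) :=
      ⟨1 / 2, 1 / 2, by norm_num, by norm_num, by norm_num, by module⟩
    have := (mem_extremePoints.1 hext).2 _ hneg _ hpos hseg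
    have : (ε / 2) • y = 0 := by simpa using this.2
    exact hy0 ((smul_eq_zero.1 this).resolve_left (half_pos hε).ne')
  · intro hspan
    refine mem_extremePoints.2 ⟨hu, fun y₁ hy₁ y₂ hy₂ hseg => ?_⟩
    obtain ⟨a, b, ha, hb, hab, rfl⟩ := hseg
    have hF : ∀ x ∈ facetOf P (a • y₁ + b • y₂), dotProd x y₁ = -1 ∧ dotProd x y₂ = -1 := by
      rintro x ⟨hxP, hx⟩
      simp only [dotProd_add_right, dotProd_smul_right] at hx
      have h₁ := hy₁ x hxP
      have h₂ := hy₂ x hxP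
      constructor <;> nlinarith
    constructor <;> refine eq_of_forall_dotProd_eq hspan fun x hx => ?_
    · rw [(hF x hx).1, hx.2]
    · rw [(hF x hx).2, hx.2]

theorem isFacet_facetOf (hP : IsReflexive P) (hd : 0 < d) {u : Fin d → ℝ}
    (hu : u ∈ dualVertices P) : IsFacet P (facetOf P u) := by
  have hspan := (hP.mem_dualVertices_iff (dualVertices_subset hu)).1 hu
  have hne : (facetOf P u).Nonempty := by
    have : Nonempty (Fin d) := ⟨⟨0, hd⟩⟩
    rw [nonempty_iff_ne_empty]
    rintro h
    rw [h, Submodule.span_empty] at hspan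
    exact bot_ne_top hspan
  refine ⟨⟨-u, 1, fun x hx => ?_, ?_⟩, hne,
    (finrank_vectorSpan_eq_sub_one_iff hne fun x hx => hx.2).2 hspan⟩
  · have := dualVertices_subset hu x hx
    rw [dotProd_comm, dotProd_eq_dotProduct, dotProduct_neg, ← dotProd_eq_dotProduct]
    linarith
  · ext x
    simp only [facetOf, mem_ofPred_eq, dotProd_comm (-u), dotProd_eq_dotProduct, dotProduct_neg,
      neg_eq_iff_eq_neg]

theorem exists_eq_facetOf (hP : IsReflexive P) (hd : 0 < d) {F : Set (Fin d → ℝ)}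
    (hF : IsFacet P F) : ∃ u ∈ dualVertices P, F = facetOf P u := by
  obtain ⟨⟨u₀, c, hle, rfl⟩, hne, hrank⟩ := hF
  have hc : 0 < c := by
    refine (by simpa [dotProd] using hle 0 (interior_subset hP.2.1) : 0 ≤ c).lt_of_ne ?_
    rintro rfl
    obtain rfl := eq_zero_of_forall_dotProd_nonpos hP.2.1 hle
    have hP' : vectorSpan ℝ P = ⊤ := by
      rw [← direction_affineSpan,
        (hP.convex.interior_nonempty_iff_affineSpan_eq_top).1 ⟨0, hP.2.1⟩,
        AffineSubspace.direction_top]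
    have : {x ∈ P | dotProd 0 x = 0} = P := by simp [dotProd]
    rw [this, hP', finrank_top, Module.finrank_fin_fun] at hrank
    omega
  set u := (-c⁻¹) • u₀
  have hFu : {x ∈ P | dotProd u₀ x = c} = facetOf P u := by
    ext x
    simp only [facetOf, u, mem_ofPred_eq, dotProd_smul_right, dotProd_comm x u₀]
    constructor <;> rintro ⟨hx, h⟩ <;> refine ⟨hx, ?_⟩
    · rw [h]; field_simp
    · field_simp at h; linarith
  have huP : u ∈ dualPolytope P := fun x hx => by
    have := hle x hx
    simp only [u, dotProd_smul_right, dotProd_comm x u₀]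
    rw [neg_mul, neg_le_neg_iff, inv_mul_le_one₀ hc]
    exact this
  refine ⟨u, (hP.mem_dualVertices_iff huP).2 ?_, hFu⟩
  rw [← hFu]
  exact (finrank_vectorSpan_eq_sub_one_iff hne fun x hx => (hFu ▸ hx).2).1 hrank

theorem sameFacet_iff (hP : IsReflexive P) (hd : 0 < d) {x y : Fin d → ℝ} (hx : x ∈ P)
    (hy : y ∈ P) :
    SameFacet P x y ↔ ∃ u ∈ dualVertices P, dotProd x u = -1 ∧ dotProd y u = -1 := by
  constructor
  · rintro ⟨F, hF, hxF, hyF⟩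
    obtain ⟨u, hu, rfl⟩ := hP.exists_eq_facetOf hd hF
    exact ⟨u, hu, hxF.2, hyF.2⟩
  · rintro ⟨u, hu, hxu, hyu⟩
    exact ⟨_, hP.isFacet_facetOf hd hu, ⟨hx, hxu⟩, ⟨hy, hyu⟩⟩

theorem add_mem_or_sameFacet (hP : IsReflexive P) (hd : 0 < d) {x y : Fin d → ℝ} (hx : x ∈ P)
    (hy : y ∈ P) (hxL : IsLatticePoint x) (hyL : IsLatticePoint y) :
    x + y ∈ P ∨ SameFacet P x y := by
  rw [or_iff_not_imp_right, hP.sameFacet_iff hd hx hy, hP.mem_iff_forall_dualVertices]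
  push Not
  intro h u hu
  rw [dotProd_add_left]
  rcases hP.dotProd_eq_neg_one_or_natCast hx hxL hu with hk | ⟨k, hk⟩ <;>
    rcases hP.dotProd_eq_neg_one_or_natCast hy hyL hu with hl | ⟨l, hl⟩
  · exact absurd hl (h u hu hk)
  · rw [hk, hl]; linarith [l.cast_nonneg (α := ℝ)]
  · rw [hk, hl]; linarith [k.cast_nonneg (α := ℝ)]
  · rw [hk, hl]; linarith [k.cast_nonneg (α := ℝ), l.cast_nonneg (α := ℝ)]

end IsReflexive

end ReflexivePolytope

section PrimitiveRelation

variable {d : ℕ} {P : Set (Fin d → ℝ)} {v w : Fin d → ℝ}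

def IsAdmissiblePair (P : Set (Fin d → ℝ)) (v w : Fin d → ℝ) (a b : ℕ) : Prop :=
  0 < a ∧ 0 < b ∧ (a : ℝ) • v + (b : ℝ) • w ∈ frontier P ∧
    SameFacet P v ((a : ℝ) • v + (b : ℝ) • w) ∧ SameFacet P w ((a : ℝ) • v + (b : ℝ) • w)

theorem IsAdmissiblePair.swap {a b : ℕ} (h : IsAdmissiblePair P v w a b) :
    IsAdmissiblePair P w v b a := by
  obtain ⟨ha, hb, hz, hvz, hwz⟩ := h
  rw [add_comm] at hz hvz hwz
  exact ⟨hb, ha, hz, hwz, hvz⟩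

namespace IsReflexive

theorem add_mem_frontier (hP : IsReflexive P) (hd : 0 < d) (hvP : v ∈ P) (hwP : w ∈ P)
    (hvL : IsLatticePoint v) (hwL : IsLatticePoint w) (hns : ¬ SameFacet P v w)
    (hnz : v + w ≠ 0) : v + w ∈ frontier P :=
  hP.mem_frontier_of_isLatticePoint ((hP.add_mem_or_sameFacet hd hvP hwP hvL hwL).resolve_right hns)
    (hvL.add hwL) hnz

/-- If `w = c • v`, the facet normals through `v` and `w` take the integer values `-c` and
`-1/c` on `w` and `v`, forcing `c = ±1`. -/
theorem linearIndependent_pair (hP : IsReflexive P) (hv : v ∈ frontier P) (hw : w ∈ frontier P)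
    (hvL : IsLatticePoint v) (hwL : IsLatticePoint w) (hne : v ≠ w) (hnz : v + w ≠ 0) :
    LinearIndependent ℝ ![v, w] := by
  rw [LinearIndependent.pair_iff' (hP.ne_zero_of_mem_frontier hv)]
  rintro c rfl
  obtain ⟨u, hu, hvu⟩ := hP.exists_dualVertex_dotProd_eq_neg_one hv
  obtain ⟨u', hu', hwu'⟩ := hP.exists_dualVertex_dotProd_eq_neg_one hw
  obtain ⟨m, hm⟩ := hwL.exists_dotProd_eq_intCast (hP.isLatticePoint_of_mem_dualVertices hu)
  obtain ⟨n, hn⟩ := hvL.exists_dotProd_eq_intCast (hP.isLatticePoint_of_mem_dualVertices hu')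
  rw [dotProd_smul_left, hvu] at hm
  rw [dotProd_smul_left, hn] at hwu'
  have hmn : m * n = 1 := by
    have : (m : ℝ) * n = 1 := by rw [← hm]; linarith
    exact_mod_cast this
  rcases Int.eq_one_or_neg_one_of_mul_eq_one hmn with rfl | rfl
  · exact hnz (by rw [show c = -1 by simp at hm; linarith]; simp)
  · exact hne (by rw [show c = 1 by simp at hm; linarith, one_smul])

theorem exists_isAdmissiblePair_one_right (hP : IsReflexive P) (hd : 0 < d) (hv : v ∈ frontier P)
    (hwP : w ∈ P) (hvL : IsLatticePoint v) (hwL : IsLatticePoint w)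
    (hli : LinearIndependent ℝ ![v, w]) (hvw : v + w ∈ P) {u : Fin d → ℝ}
    (hu : u ∈ dualVertices P) (hvu : dotProd v u = 0) (hwu : dotProd w u = -1) :
    ∃ a, IsAdmissiblePair P v w a 1 := by
  classical
  have hvP := hP.mem_of_mem_frontier hv
  have hexit : ∃ n : ℕ, (n : ℝ) • v + w ∉ P := by
    obtain ⟨uv, huv, hvuv⟩ := hP.exists_dualVertex_dotProd_eq_neg_one hv
    obtain ⟨n, hn⟩ := exists_nat_gt (dotProd w uv + 1)
    refine ⟨n, fun h => ?_⟩
    have := dualVertices_subset huv _ h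
    rw [dotProd_add_left, dotProd_smul_left, hvuv] at this
    linarith
  set N := Nat.find hexit
  have hN : 2 ≤ N := (Nat.le_find_iff _ _).2 fun m hm => by
    interval_cases m <;> simpa
  set a := N - 1
  set z := (a : ℝ) • v + w
  have hzP : z ∈ P := not_not.1 (Nat.find_min hexit (show a < N by omega))
  have hvz : v + z ∉ P := by
    have hspec : (N : ℝ) • v + w ∉ P := Nat.find_spec hexit
    have hNa : (N : ℝ) = a + 1 := by exact_mod_cast (show N = a + 1 by omega)
    rwa [show (N : ℝ) • v + w = v + z by rw [hNa]; module] at hspec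
  have hzL : IsLatticePoint z := (hvL.natCast_smul a).add hwL
  have hz0 : z ≠ 0 := fun h =>
    one_ne_zero (LinearIndependent.pair_iff.1 hli a 1 (by rw [one_smul]; exact h)).2
  refine ⟨a, by omega, one_pos, ?_, ?_, ?_⟩ <;> rw [Nat.cast_one, one_smul]
  · exact hP.mem_frontier_of_isLatticePoint hzP hzL hz0
  · exact (hP.add_mem_or_sameFacet hd hvP hzP hvL hzL).resolve_left hvz
  · exact (hP.sameFacet_iff hd hwP hzP).2 ⟨u, hu, hwu, by simp [z, hvu, hwu]⟩

theorem exists_isAdmissiblePair (hP : IsReflexive P) (hd : 0 < d) (hv : v ∈ frontier P)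
    (hw : w ∈ frontier P) (hvL : IsLatticePoint v) (hwL : IsLatticePoint w)
    (hli : LinearIndependent ℝ ![v, w]) (hvw : v + w ∈ frontier P) :
    ∃ a b, IsAdmissiblePair P v w a b := by
  have hvP := hP.mem_of_mem_frontier hv
  have hwP := hP.mem_of_mem_frontier hw
  obtain ⟨u, hu, hvwu⟩ := hP.exists_dualVertex_dotProd_eq_neg_one hvw
  rw [dotProd_add_left] at hvwu
  rcases hP.dotProd_eq_neg_one_or_natCast hvP hvL hu with hk | ⟨k, hk⟩ <;>
    rcases hP.dotProd_eq_neg_one_or_natCast hwP hwL hu with hl | ⟨l, hl⟩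
  · linarith
  · obtain rfl : l = 0 := by rw [hk, hl] at hvwu; exact_mod_cast (by linarith : (l : ℝ) = 0)
    obtain ⟨b, hb⟩ := hP.exists_isAdmissiblePair_one_right hd hw hvP hwL hvL
      (LinearIndependent.pair_symm_iff.1 hli) (add_comm v w ▸ hP.mem_of_mem_frontier hvw) hu
      (by simpa using hl) hk
    exact ⟨1, b, hb.swap⟩
  · obtain rfl : k = 0 := by rw [hk, hl] at hvwu; exact_mod_cast (by linarith : (k : ℝ) = 0)
    obtain ⟨a, ha⟩ := hP.exists_isAdmissiblePair_one_right hd hv hwP hvL hwL hli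
      (hP.mem_of_mem_frontier hvw) hu (by simpa using hk) hl
    exact ⟨a, 1, ha⟩
  · rw [hk, hl] at hvwu
    linarith [k.cast_nonneg (α := ℝ), l.cast_nonneg (α := ℝ)]

theorem xor_mem_of_isFacet (hP : IsReflexive P) (hd : 0 < d) (hvP : v ∈ P)
    (hwP : w ∈ P) (hvL : IsLatticePoint v) (hwL : IsLatticePoint w) (hns : ¬ SameFacet P v w)
    (a b : ℕ) {F : Set (Fin d → ℝ)} (hF : IsFacet P F) (hz : (a : ℝ) • v + (b : ℝ) • w ∈ F) :
    Xor (v ∈ F) (w ∈ F) := by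
  refine (xor_iff_or_and_not_and _ _).2 ⟨?_, fun ⟨hvF, hwF⟩ => hns ⟨F, hF, hvF, hwF⟩⟩
  obtain ⟨u, hu, rfl⟩ := hP.exists_eq_facetOf hd hF
  rcases hP.dotProd_eq_neg_one_or_natCast hvP hvL hu with hk | ⟨k, hk⟩
  · exact Or.inl ⟨hvP, hk⟩
  rcases hP.dotProd_eq_neg_one_or_natCast hwP hwL hu with hl | ⟨l, hl⟩
  · exact Or.inr ⟨hwP, hl⟩
  have hzu := hz.2
  rw [dotProd_add_left, dotProd_smul_left, dotProd_smul_left, hk, hl] at hzu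
  have : (0 : ℝ) ≤ a * k + b * l := by positivity
  linarith

end IsReflexive

namespace IsAdmissiblePair

variable {a b : ℕ}

theorem mem (h : IsAdmissiblePair P v w a b) (hP : IsReflexive P) :
    (a : ℝ) • v + (b : ℝ) • w ∈ P :=
  hP.mem_of_mem_frontier h.2.2.1

theorem exists_dualVertex (h : IsAdmissiblePair P v w a b) (hP : IsReflexive P) (hd : 0 < d)
    (hwL : IsLatticePoint w) (hns : ¬ SameFacet P v w) :
    ∃ u ∈ dualVertices P, ∃ s : ℕ, dotProd v u = -1 ∧ dotProd w u = s ∧ a = b * s + 1 := by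
  obtain ⟨-, -, hz, hvz, hwz⟩ := h
  have hvP := hvz.left_mem
  have hwP := hwz.left_mem
  obtain ⟨u, hu, hvu, hzu⟩ := (hP.sameFacet_iff hd hvP (hP.mem_of_mem_frontier hz)).1 hvz
  rcases hP.dotProd_eq_neg_one_or_natCast hwP hwL hu with hwu | ⟨s, hs⟩
  · exact absurd ((hP.sameFacet_iff hd hvP hwP).2 ⟨u, hu, hvu, hwu⟩) hns
  refine ⟨u, hu, s, hvu, hs, ?_⟩
  rw [dotProd_add_left, dotProd_smul_left, dotProd_smul_left, hvu, hs] at hzu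
  exact_mod_cast (by linarith : (a : ℝ) = b * s + 1)

theorem eq_one_or_eq_one (h : IsAdmissiblePair P v w a b) (hP : IsReflexive P) (hd : 0 < d)
    (hvL : IsLatticePoint v) (hwL : IsLatticePoint w) (hns : ¬ SameFacet P v w) :
    a = 1 ∨ b = 1 := by
  obtain ⟨-, -, s, -, -, hs⟩ := h.exists_dualVertex hP hd hwL hns
  obtain ⟨-, -, t, -, -, ht⟩ := h.swap.exists_dualVertex hP hd hvL (mt SameFacet.symm hns)
  rcases Nat.eq_zero_or_pos s with rfl | hs0
  · exact Or.inl (by simpa using hs)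
  rcases Nat.eq_zero_or_pos t with rfl | ht0
  · exact Or.inr (by simpa using ht)
  -- otherwise `a = b s + 1 ≥ b + 1 = a t + 2 ≥ a + 2`
  nlinarith

theorem eq_one_and_le_of_mem (h : IsAdmissiblePair P v w 1 b) (hP : IsReflexive P) (hd : 0 < d)
    (hvL : IsLatticePoint v) (hwL : IsLatticePoint w) (hns : ¬ SameFacet P v w) {a' b' : ℕ}
    (ha' : 0 < a') (hz' : (a' : ℝ) • v + (b' : ℝ) • w ∈ P) : a' = 1 ∧ b' ≤ b := by
  obtain ⟨u, hu, s, hvu, hwu, hs⟩ := h.exists_dualVertex hP hd hwL hns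
  obtain ⟨u', hu', t, hwu', hvu', ht⟩ := h.swap.exists_dualVertex hP hd hvL (mt SameFacet.symm hns)
  obtain rfl : s = 0 := by simpa [h.2.1.ne'] using hs
  have hzu := dualVertices_subset hu _ hz'
  have hzu' := dualVertices_subset hu' _ hz'
  simp only [dotProd_add_left, dotProd_smul_left, hvu, hwu, hvu', hwu'] at hzu hzu'
  obtain rfl : a' = 1 := by
    have : (a' : ℝ) ≤ 1 := by push_cast at hzu; linarith
    have : a' ≤ 1 := by exact_mod_cast this
    omega
  refine ⟨rfl, ?_⟩
  have : (b' : ℝ) ≤ b := by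
    rw [ht]; push_cast at hzu' ⊢; linarith
  exact_mod_cast this

theorem unique (h : IsAdmissiblePair P v w a b) (hP : IsReflexive P) (hd : 0 < d)
    (hvL : IsLatticePoint v) (hwL : IsLatticePoint w) (hns : ¬ SameFacet P v w) {a' b' : ℕ}
    (h' : IsAdmissiblePair P v w a' b') : a = a' ∧ b = b' := by
  rcases h.eq_one_or_eq_one hP hd hvL hwL hns with rfl | rfl
  · obtain ⟨rfl, hb'⟩ := h.eq_one_and_le_of_mem hP hd hvL hwL hns h'.1 (h'.mem hP)
    have hb := (h'.eq_one_and_le_of_mem hP hd hvL hwL hns h.1 (h.mem hP)).2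
    exact ⟨rfl, le_antisymm hb hb'⟩
  · have hns' := mt SameFacet.symm hns
    obtain ⟨rfl, ha'⟩ := h.swap.eq_one_and_le_of_mem hP hd hwL hvL hns' h'.2.1 (h'.swap.mem hP)
    have ha := (h'.swap.eq_one_and_le_of_mem hP hd hwL hvL hns' h.2.1 (h.swap.mem hP)).2
    exact ⟨le_antisymm ha ha', rfl⟩

theorem exists_intCast_eq (h : IsAdmissiblePair P v w a b) (hP : IsReflexive P) (hd : 0 < d)
    (hvL : IsLatticePoint v) (hwL : IsLatticePoint w) (hns : ¬ SameFacet P v w) {α β : ℝ}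
    (hx : IsLatticePoint (α • v + β • w)) : ∃ m n : ℤ, α = m ∧ β = n := by
  obtain ⟨u, hu, s, hvu, hwu, hs⟩ := h.exists_dualVertex hP hd hwL hns
  obtain ⟨u', hu', t, hwu', hvu', ht⟩ := h.swap.exists_dualVertex hP hd hvL (mt SameFacet.symm hns)
  have hst : (s : ℝ) * t = 0 := by
    rcases h.eq_one_or_eq_one hP hd hvL hwL hns with rfl | rfl
    · obtain rfl : s = 0 := by simpa [h.2.1.ne'] using hs
      simp
    · obtain rfl : t = 0 := by simpa [h.1.ne'] using ht
      simp
  obtain ⟨k, hk⟩ := hx.exists_dotProd_eq_intCast (hP.isLatticePoint_of_mem_dualVertices hu)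
  obtain ⟨l, hl⟩ := hx.exists_dotProd_eq_intCast (hP.isLatticePoint_of_mem_dualVertices hu')
  simp only [dotProd_add_left, dotProd_smul_left, hvu, hwu, hvu', hwu'] at hk hl
  refine ⟨s * -(t * k + l) - k, -(t * k + l), ?_, ?_⟩ <;> push_cast
  · linear_combination (-(s : ℝ) * t - 1) * hk - s * hl + β * s * hst
  · linear_combination (-(t : ℝ)) * hk - hl + β * hst

theorem ncard_setOf_isLatticePoint_segment (h : IsAdmissiblePair P v w a b) (hP : IsReflexive P)
    (hd : 0 < d) (hvL : IsLatticePoint v) (hwL : IsLatticePoint w) (hns : ¬ SameFacet P v w)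
    (hli : LinearIndependent ℝ ![v, w]) :
    {x ∈ segment ℝ v ((a : ℝ) • v + (b : ℝ) • w) | IsLatticePoint x}.ncard = b + 1 := by
  set q := ((a : ℝ) - 1) • v + w
  have hqL : IsLatticePoint q := by simpa [q] using (hvL.intCast_smul (a - 1)).add hwL
  have hq0 : q ≠ 0 := fun hq =>
    one_ne_zero (LinearIndependent.pair_iff.1 hli ((a : ℝ) - 1) 1 (by rw [one_smul]; exact hq)).2
  -- as `(a - 1) (b - 1) = 0`
  have hz : (a : ℝ) • v + (b : ℝ) • w = v + (b : ℝ) • q := by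
    rcases h.eq_one_or_eq_one hP hd hvL hwL hns with rfl | rfl <;> simp only [q] <;> module
  rw [hz]
  refine _root_.ncard_setOf_isLatticePoint_segment hvL hqL hq0 (fun t ht => ?_) b
  obtain ⟨-, n, -, hn⟩ := h.exists_intCast_eq hP hd hvL hwL hns (α := 1 + t * (a - 1)) (β := t)
    (by convert ht using 1; simp only [q]; module)
  exact ⟨n, hn⟩

end IsAdmissiblePair

end PrimitiveRelation

/-- Generalised primitive relation for a pair of boundary lattice points of a
reflexive polytope not lying in a common facet and not opposite: `v + w ∈ ∂P`, the pair
`{v, w}` is a `ℤ`-basis of `span(v,w) ∩ ℤ^d`, and there is a unique pair `(a,b)` of positive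
integers with `z = a•v + b•w ∈ ∂P`, `v ∼ z`, `w ∼ z`; moreover `a = 1` or `b = 1`,
`a = |[w,z] ∩ ℤ^d| - 1`, `b = |[v,z] ∩ ℤ^d| - 1`, and every facet containing `z` contains
exactly one of `v`, `w`. -/
theorem generalized_primitive_relation {d : ℕ} (P : Set (Fin d → ℝ)) (hP : IsReflexive P)
    (v w : Fin d → ℝ) (hv : v ∈ frontier P) (hw : w ∈ frontier P)
    (hvL : IsLatticePoint v) (hwL : IsLatticePoint w) (hne : v ≠ w)
    (hns : ¬ SameFacet P v w) (hnz : v + w ≠ 0) :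
    v + w ∈ frontier P ∧
    (LinearIndependent ℝ ![v, w] ∧
      ∀ z : Fin d → ℝ, IsLatticePoint z →
        z ∈ Submodule.span ℝ ({v, w} : Set (Fin d → ℝ)) →
        ∃ a b : ℤ, z = (a : ℝ) • v + (b : ℝ) • w) ∧
    (∃! p : ℕ × ℕ, 0 < p.1 ∧ 0 < p.2 ∧
      (p.1 : ℝ) • v + (p.2 : ℝ) • w ∈ frontier P ∧
      SameFacet P v ((p.1 : ℝ) • v + (p.2 : ℝ) • w) ∧
      SameFacet P w ((p.1 : ℝ) • v + (p.2 : ℝ) • w)) ∧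
    (∀ a b : ℕ, 0 < a → 0 < b →
      (a : ℝ) • v + (b : ℝ) • w ∈ frontier P →
      SameFacet P v ((a : ℝ) • v + (b : ℝ) • w) →
      SameFacet P w ((a : ℝ) • v + (b : ℝ) • w) →
      (a = 1 ∨ b = 1) ∧
      a + 1 = {x ∈ segment ℝ w ((a : ℝ) • v + (b : ℝ) • w) | IsLatticePoint x}.ncard ∧
      b + 1 = {x ∈ segment ℝ v ((a : ℝ) • v + (b : ℝ) • w) | IsLatticePoint x}.ncard ∧
      ∀ F, IsFacet P F → (a : ℝ) • v + (b : ℝ) • w ∈ F → Xor' (v ∈ F) (w ∈ F)) := by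
  have hd : 0 < d := Nat.pos_of_ne_zero fun hd =>
    hP.ne_zero_of_mem_frontier hv (by subst hd; exact Subsingleton.elim _ _)
  have hvP := hP.mem_of_mem_frontier hv
  have hwP := hP.mem_of_mem_frontier hw
  have hvw := hP.add_mem_frontier hd hvP hwP hvL hwL hns hnz
  have hli := hP.linearIndependent_pair hv hw hvL hwL hne hnz
  obtain ⟨a, b, hab⟩ := hP.exists_isAdmissiblePair hd hv hw hvL hwL hli hvw
  refine ⟨hvw, ⟨hli, fun z hzL hz => ?_⟩, ⟨(a, b), hab, fun p hp => ?_⟩,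
    fun a' b' ha' hb' hz hvz hwz => ?_⟩
  · obtain ⟨α, β, rfl⟩ := Submodule.mem_span_pair.1 hz
    obtain ⟨m, n, rfl, rfl⟩ := hab.exists_intCast_eq hP hd hvL hwL hns hzL
    exact ⟨m, n, rfl⟩
  · obtain ⟨h₁, h₂⟩ := hab.unique hP hd hvL hwL hns hp
    exact Prod.ext h₁.symm h₂.symm
  · have h : IsAdmissiblePair P v w a' b' := ⟨ha', hb', hz, hvz, hwz⟩
    refine ⟨h.eq_one_or_eq_one hP hd hvL hwL hns, ?_,
      (h.ncard_setOf_isLatticePoint_segment hP hd hvL hwL hns hli).symm,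
      fun F hF hzF => hP.xor_mem_of_isFacet hd hvP hwP hvL hwL hns a' b' hF hzF⟩
    rw [add_comm ((a' : ℝ) • v)]
    exact (h.swap.ncard_setOf_isLatticePoint_segment hP hd hwL hvL (mt SameFacet.symm hns)
      (LinearIndependent.pair_symm_iff.1 hli)).symm
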